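/- arXiv:1304.0649 — 3 statements merged into one kernel-verified Lean document; each statement's English description precedes it below -/
import Mathlib

section
/- For every 0 < d < 1 the estimate of Theorem 1 is sharp: setting a := π(1−d²), S := [−a, a], Λ := ℤ, and f_j(x) := sin(a(x−j))/(π(x−j)) for j ∈ ℤ, each f_j belongs to PW_S, sup_j ‖f_j‖_{L²(ℝ)} < ∞, ‖f_j|_ℤ − δ_j‖_{ℓ²(ℤ)} = d for every j ∈ ℤ, and m(S) = 2π(1 − d²) D⁺(ℤ). -/
open MeasureTheory Filter

/-- A set `Λ ⊆ ℝ` is uniformly discrete if its points are separated by some `γ > 0`. -/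
def UniformlyDiscrete (Λ : Set ℝ) : Prop :=
  ∃ γ > (0 : ℝ), ∀ x ∈ Λ, ∀ y ∈ Λ, x ≠ y → γ ≤ |x - y|

/-- `f` belongs to the Paley–Wiener space `PW_S`: `f(x) = ∫_S F(t) e^{itx} dt`
for some `F ∈ L²(ℝ)` vanishing outside `S`. -/
def IsPaleyWiener (S : Set ℝ) (f : ℝ → ℂ) : Prop :=
  ∃ F : ℝ → ℂ, MemLp F 2 volume ∧ (∀ t ∉ S, F t = 0) ∧
    ∀ x : ℝ, f x = ∫ t in S, F t * Complex.exp (Complex.I * t * x)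

/-- Upper uniform (Beurling) density `D⁺(Λ)`. -/
noncomputable def upperUniformDensity (Λ : Set ℝ) : ℝ :=
  limsup (fun r : ℝ => ⨆ a : ℝ, ((Λ ∩ Set.Ioo a (a + r)).ncard : ℝ) / r) atTop

/-!
`f_j` is the translate by `j` of the kernel `sin(a x)/(π x)`, the inverse Fourier transform of
`(2π)⁻¹ 1_{[-a,a]}`; this gives the Paley–Wiener property, and all `f_j` have the same `L²` norm.
Since `a = π - π d²`, at an integer `n ≠ 0` we have `sin(a n) = ± sin(π d² n)`, while at `n = 0`
the defect is `a/π - 1 = -d²`; so `|f_j(k) - δ_j(k)|` is the kernel for `π d²` sampled at `k - j`.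
Its squares sum to `d²` by the Fourier series of the Bernoulli polynomial `B₂`, i.e.
`∑_{n ≥ 1} cos(2π n x)/n² = π² (x² - x + 1/6)` on `[0, 1]`.
Finally `ℤ` meets every interval of length `r` in between `r - 1` and `r + 1` points, so `D⁺(ℤ) = 1`.
-/

open Set Real

theorem ncard_range_intCast_inter_Ioo (a b : ℝ) :
    (range ((↑) : ℤ → ℝ) ∩ Ioo a b).ncard = (⌈b⌉ - ⌊a⌋ - 1).toNat := by
  have h : range ((↑) : ℤ → ℝ) ∩ Ioo a b = ((↑) : ℤ → ℝ) '' Finset.Ioo ⌊a⌋ ⌈b⌉ := by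
    ext y
    simp only [mem_inter_iff, mem_range, mem_Ioo, Finset.coe_Ioo, mem_image]
    constructor
    · rintro ⟨⟨n, rfl⟩, ha, hb⟩
      exact ⟨n, ⟨Int.floor_lt.2 ha, Int.lt_ceil.2 hb⟩, rfl⟩
    · rintro ⟨n, ⟨ha, hb⟩, rfl⟩
      exact ⟨⟨n, rfl⟩, Int.floor_lt.1 ha, Int.lt_ceil.1 hb⟩
  rw [h, ncard_image_of_injective _ Int.cast_injective, ncard_coe_finset, Int.card_Ioo]

theorem ncard_range_intCast_inter_Ioo_mem_Icc (a : ℝ) {r : ℝ} (hr : 0 ≤ r) :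
    ((range ((↑) : ℤ → ℝ) ∩ Ioo a (a + r)).ncard : ℝ) ∈ Icc (r - 1) (r + 1) := by
  have hcount : (((⌈a + r⌉ - ⌊a⌋ - 1).toNat : ℕ) : ℝ) = max ((⌈a + r⌉ - ⌊a⌋ - 1 : ℤ) : ℝ) 0 := by
    exact_mod_cast Int.toNat_eq_max _
  rw [ncard_range_intCast_inter_Ioo, hcount]
  have hceil := Int.ceil_lt_add_one (a + r)
  have hfloor := Int.sub_one_lt_floor a
  push_cast
  constructor
  · exact le_max_of_le_left (by linarith [Int.le_ceil (a + r), Int.floor_le a])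
  · exact max_le (by linarith) (by linarith)

theorem tendsto_add_const_div_self (c : ℝ) :
    Tendsto (fun r : ℝ => (r + c) / r) atTop (nhds 1) := by
  have h : Tendsto (fun r : ℝ => 1 + c / r) atTop (nhds (1 + 0)) :=
    tendsto_const_nhds.add (tendsto_const_nhds.div_atTop tendsto_id)
  rw [add_zero] at h
  refine h.congr' ?_
  filter_upwards [eventually_gt_atTop 0] with r hr
  field_simp

theorem upperUniformDensity_range_intCast : upperUniformDensity (range ((↑) : ℤ → ℝ)) = 1 := by
  refine Tendsto.limsup_eq (tendsto_of_tendsto_of_tendsto_of_le_of_le'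
    (tendsto_add_const_div_self (-1)) (tendsto_add_const_div_self 1) ?_ ?_)
  all_goals filter_upwards [eventually_gt_atTop 0] with r hr
  · have hbdd : BddAbove (range fun a : ℝ =>
        ((range ((↑) : ℤ → ℝ) ∩ Ioo a (a + r)).ncard : ℝ) / r) := by
      refine ⟨(r + 1) / r, forall_mem_range.2 fun a => ?_⟩
      exact div_le_div_of_nonneg_right (ncard_range_intCast_inter_Ioo_mem_Icc a hr.le).2 hr.le
    refine le_trans ?_ (le_ciSup hbdd 0)
    exact div_le_div_of_nonneg_right (ncard_range_intCast_inter_Ioo_mem_Icc 0 hr.le).1 hr.le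
  · exact ciSup_le fun a =>
      div_le_div_of_nonneg_right (ncard_range_intCast_inter_Ioo_mem_Icc a hr.le).2 hr.le

noncomputable def sincKernel (a x : ℝ) : ℝ := a / π * sinc (a * x)

theorem sincKernel_eq_ite (a x : ℝ) :
    sincKernel a x = if x = 0 then a / π else Real.sin (a * x) / (π * x) := by
  unfold sincKernel
  split_ifs with hx
  · simp [hx]
  · rcases eq_or_ne a 0 with rfl | ha
    · simp
    · rw [sinc_of_ne_zero (mul_ne_zero ha hx)]
      field_simp

theorem sincKernel_zero_right (a : ℝ) : sincKernel a 0 = a / π := by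
  simp [sincKernel]

theorem sincKernel_of_ne_zero (a : ℝ) {x : ℝ} (hx : x ≠ 0) :
    sincKernel a x = Real.sin (a * x) / (π * x) := by
  rw [sincKernel_eq_ite, if_neg hx]

theorem integral_Icc_cexp_I_mul {a : ℝ} (ha : 0 ≤ a) (y : ℝ) :
    ∫ t in Icc (-a) a, Complex.exp (Complex.I * t * y) = ((2 * π * sincKernel a y : ℝ) : ℂ) := by
  rw [integral_Icc_eq_integral_Ioc, ← intervalIntegral.integral_of_le (by linarith)]
  rcases eq_or_ne y 0 with rfl | hy
  · have : (π : ℂ) ≠ 0 := by exact_mod_cast pi_ne_zero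
    simp only [Complex.ofReal_zero, mul_zero, Complex.exp_zero, intervalIntegral.integral_const,
      sub_neg_eq_add, Complex.real_smul, Complex.ofReal_add, mul_one, sincKernel_zero_right,
      Complex.ofReal_mul, Complex.ofReal_ofNat, Complex.ofReal_div]
    field_simp
    ring
  · have hc : Complex.I * y ≠ 0 := mul_ne_zero Complex.I_ne_zero (by exact_mod_cast hy)
    simp_rw [mul_right_comm Complex.I _ (y : ℂ)]
    rw [integral_exp_mul_complex hc, sincKernel_of_ne_zero a hy]
    have e : ∀ s : ℝ, Complex.I * y * s = ((s * y : ℝ) : ℂ) * Complex.I := fun s => by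
      push_cast; ring
    rw [e, e, Complex.exp_mul_I, Complex.exp_mul_I]
    push_cast
    rw [neg_mul, Complex.cos_neg, Complex.sin_neg]
    field_simp
    ring

theorem isPaleyWiener_sincKernel_comp_sub {a : ℝ} (ha : 0 ≤ a) (s : ℝ) :
    IsPaleyWiener (Icc (-a) a) (fun x => (sincKernel a (x - s) : ℂ)) := by
  set G : ℝ → ℂ := fun t => Complex.exp (-(Complex.I * t * s)) / (2 * π)
  have hG : ∀ t, ‖G t‖ = 1 / (2 * π) := fun t => by
    simp [G, Complex.norm_exp, abs_of_pos pi_pos]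
  refine ⟨(Icc (-a) a).indicator G, ?_, fun t ht => indicator_of_notMem ht G, fun x => ?_⟩
  · refine (memLp_indicator_iff_restrict measurableSet_Icc).2 ?_
    exact MemLp.of_bound (by fun_prop : Continuous G).aestronglyMeasurable _
      (Eventually.of_forall fun t => (hG t).le)
  · have hπ : (π : ℂ) ≠ 0 := by exact_mod_cast pi_ne_zero
    calc ((sincKernel a (x - s) : ℝ) : ℂ)
        = (∫ t in Icc (-a) a, Complex.exp (Complex.I * t * (x - s : ℝ))) / (2 * π) := by
          rw [integral_Icc_cexp_I_mul ha]; push_cast; field_simp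
      _ = ∫ t in Icc (-a) a, (Icc (-a) a).indicator G t * Complex.exp (Complex.I * t * x) := by
          rw [← integral_div]
          refine setIntegral_congr_fun measurableSet_Icc fun t ht => ?_
          rw [indicator_of_mem ht, div_mul_eq_mul_div, ← Complex.exp_add]
          push_cast; ring_nf

theorem sinc_sq_le_two_div (x : ℝ) : sinc x ^ 2 ≤ 2 / (1 + x ^ 2) := by
  rw [le_div_iff₀ (by positivity)]
  have h1 : sinc x ^ 2 ≤ 1 := by
    rw [sq_le_one_iff_abs_le_one]; exact abs_sinc_le_one x
  have h2 : sinc x ^ 2 * x ^ 2 ≤ 1 := by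
    rcases eq_or_ne x 0 with rfl | hx
    · simp
    · rw [sinc_of_ne_zero hx, div_pow, div_mul_cancel₀ _ (pow_ne_zero 2 hx)]
      exact sin_sq_le_one x
  nlinarith

theorem integrable_sinc_sq : Integrable (fun x => sinc x ^ 2) := by
  refine (integrable_inv_one_add_sq.const_mul 2).mono' (by fun_prop) ?_
  refine Eventually.of_forall fun x => ?_
  rw [Real.norm_of_nonneg (sq_nonneg _), ← div_eq_mul_inv]
  exact sinc_sq_le_two_div x

theorem memLp_two_sincKernel (a : ℝ) : MemLp (sincKernel a) 2 := by
  rcases eq_or_ne a 0 with rfl | ha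
  · have h0 : sincKernel 0 = 0 := funext fun x => by simp [sincKernel]
    exact h0 ▸ MemLp.zero
  · have hmeas : AEStronglyMeasurable (sincKernel a) :=
      (by unfold sincKernel; fun_prop : Continuous (sincKernel a)).aestronglyMeasurable
    rw [memLp_two_iff_integrable_sq hmeas]
    simpa [sincKernel, mul_pow] using
      (integrable_sinc_sq.comp_mul_left' ha).const_mul ((a / π) ^ 2)

theorem sincKernel_neg (a x : ℝ) : sincKernel a (-x) = sincKernel a x := by
  rw [sincKernel, mul_neg, sinc_neg, sincKernel]

theorem hasSum_sincKernel_pi_mul_sq_nat {x : ℝ} (hx : x ∈ Icc 0 1) :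
    HasSum (fun n : ℕ => sincKernel (π * x) n ^ 2) ((x + x ^ 2) / 2) := by
  have hcos := hasSum_one_div_nat_pow_mul_cos one_ne_zero hx
  simp only [Nat.mul_one] at hcos
  rw [← bernoulliFun, bernoulliFun_two] at hcos
  have h := ((hasSum_zeta_two.sub hcos).div_const (2 * π ^ 2)).add (hasSum_ite_eq 0 (x ^ 2))
  have hπ := pi_ne_zero
  have hterm : (fun n : ℕ => sincKernel (π * x) n ^ 2) = fun n : ℕ =>
      (1 / (n : ℝ) ^ 2 - 1 / (n : ℝ) ^ 2 * cos (2 * π * n * x)) / (2 * π ^ 2) +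
        if n = 0 then x ^ 2 else 0 := by
    funext n
    rcases eq_or_ne n 0 with rfl | hn
    · simp [sincKernel_zero_right]
    · have hn' : (n : ℝ) ≠ 0 := Nat.cast_ne_zero.2 hn
      rw [sincKernel_of_ne_zero _ hn', if_neg hn, add_zero, div_pow, sin_sq_eq_half_sub]
      field_simp
  have hvalue : (x + x ^ 2) / 2 =
      (π ^ 2 / 6 - (-1) ^ (1 + 1) * (2 * π) ^ 2 / 2 / (Nat.factorial 2 : ℝ) * (x ^ 2 - x + 6⁻¹)) /
        (2 * π ^ 2) + x ^ 2 := by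
    rw [Nat.factorial_two, Nat.cast_two]
    field_simp
    ring
  rwa [hterm, hvalue]

theorem hasSum_sincKernel_pi_mul_sq_int {x : ℝ} (hx : x ∈ Icc 0 1) :
    HasSum (fun n : ℤ => sincKernel (π * x) n ^ 2) x := by
  have hnat := hasSum_sincKernel_pi_mul_sq_nat hx
  have hneg : HasSum (fun n : ℕ => sincKernel (π * x) ((-n : ℤ) : ℝ) ^ 2) ((x + x ^ 2) / 2) := by
    simpa only [Int.cast_neg, Int.cast_natCast, sincKernel_neg] using hnat
  have h := HasSum.of_nat_of_neg (f := fun n : ℤ => sincKernel (π * x) n ^ 2) hnat hneg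
  rwa [Int.cast_zero, sincKernel_zero_right, mul_div_cancel_left₀ _ pi_ne_zero, add_halves,
    add_sub_cancel_right] at h

theorem norm_sincKernel_pi_mul_one_sub_sub_ite (x : ℝ) (n : ℤ) :
    ‖((sincKernel (π * (1 - x)) n : ℝ) : ℂ) - if n = 0 then 1 else 0‖ = |sincKernel (π * x) n| := by
  rcases eq_or_ne n 0 with rfl | hn
  · simp only [Int.cast_zero, sincKernel_zero_right, if_true]
    rw [mul_div_cancel_left₀ _ pi_ne_zero, mul_div_cancel_left₀ _ pi_ne_zero,
      ← Complex.ofReal_one, ← Complex.ofReal_sub, Complex.norm_real, Real.norm_eq_abs,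
      sub_sub_cancel_left, abs_neg]
  · have hn' : (n : ℝ) ≠ 0 := Int.cast_ne_zero.2 hn
    rw [if_neg hn, sub_zero, Complex.norm_real, Real.norm_eq_abs, sincKernel_of_ne_zero _ hn',
      sincKernel_of_ne_zero _ hn', show π * (1 - x) * n = n * π - π * x * n by ring,
      sin_int_mul_pi_sub, abs_div, abs_div, abs_neg, abs_mul, abs_zpow, abs_neg, abs_one,
      one_zpow, one_mul]

/-- **Sharpness of Theorem 1.** For `a := π(1−d²)`, `S := [−a,a]`, `Λ := ℤ` and
`f_j(x) := sin(a(x−j))/(π(x−j))`, the hypotheses of Theorem 1 hold with equality: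
`‖f_j|_ℤ − δ_j‖²_{ℓ²} = d²` and `m(S) = 2π(1−d²) D⁺(ℤ)`. -/
theorem sharpness_of_measure_bound (d : ℝ) (hd0 : 0 < d) (hd1 : d < 1) :
    let a : ℝ := Real.pi * (1 - d ^ 2)
    let S : Set ℝ := Set.Icc (-a) a
    let f : ℤ → ℝ → ℂ := fun j x =>
      if x = (j : ℝ) then ((a / Real.pi : ℝ) : ℂ)
      else ((Real.sin (a * (x - (j : ℝ))) / (Real.pi * (x - (j : ℝ))) : ℝ) : ℂ)
    (∀ j : ℤ, IsPaleyWiener S (f j)) ∧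
    (∃ M : ℝ, ∀ j : ℤ, eLpNorm (f j) 2 volume ≤ ENNReal.ofReal M) ∧
    (∀ j : ℤ,
      Summable (fun k : ℤ => ‖f j (k : ℝ) - (if k = j then 1 else 0)‖ ^ 2) ∧
      ∑' k : ℤ, ‖f j (k : ℝ) - (if k = j then 1 else 0)‖ ^ 2 = d ^ 2) ∧
    (volume S).toReal
      = 2 * Real.pi * (1 - d ^ 2) * upperUniformDensity (Set.range ((↑) : ℤ → ℝ)) := by
  intro a S f
  have hd2 : d ^ 2 ∈ Icc 0 1 := ⟨sq_nonneg d, by nlinarith⟩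
  have ha : 0 ≤ a := mul_nonneg pi_pos.le (by linarith [hd2.2])
  have hf : f = fun (j : ℤ) x => (sincKernel a (x - j) : ℂ) := by
    funext j x
    simp only [f, sincKernel_eq_ite, sub_eq_zero]
    split_ifs <;> rfl
  have hL2 : MemLp (fun x => (sincKernel a x : ℂ)) 2 := (memLp_two_sincKernel a).ofReal
  refine ⟨fun j => hf ▸ isPaleyWiener_sincKernel_comp_sub ha j,
    ⟨(eLpNorm (fun x => (sincKernel a x : ℂ)) 2).toReal, fun j => ?_⟩, fun j => ?_, ?_⟩
  · rw [hf, ENNReal.ofReal_toReal hL2.eLpNorm_ne_top]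
    exact (eLpNorm_comp_measurePreserving hL2.1 (measurePreserving_sub_right volume (j : ℝ))).le
  · have hterm : (fun k : ℤ => ‖f j k - if k = j then 1 else 0‖ ^ 2) =
        (fun n : ℤ => sincKernel (π * d ^ 2) n ^ 2) ∘ Equiv.subRight j := by
      funext k
      rw [Function.comp_apply, Equiv.subRight_apply, ← sq_abs (sincKernel _ _),
        ← norm_sincKernel_pi_mul_one_sub_sub_ite, hf, Int.cast_sub]
      simp only [sub_eq_zero]
      rfl
    have h := (Equiv.hasSum_iff (Equiv.subRight j)).2 (hasSum_sincKernel_pi_mul_sq_int hd2)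
    rw [hterm]
    exact ⟨h.summable, h.tsum_eq⟩
  · rw [Real.volume_Icc, upperUniformDensity_range_intCast, ENNReal.toReal_ofReal (by linarith)]
    ring
end

section
/- Let 0 < d < 1 and let {u_j}, 1 ≤ j ≤ n, be an orthonormal basis of the n-dimensional complex Euclidean space ℂⁿ. Suppose {v_j}, 1 ≤ j ≤ n, are vectors in ℂⁿ satisfying ‖v_j − u_j‖ ≤ d for j = 1, …, n. Then for every α with 1 < α < 1/d there is a linear subspace X ⊆ ℂⁿ such that (i) dim X > (1 − α²d²)n − 1, and (ii) ‖Σ_{j=1}^n c_j v_j‖² ≥ (1 − 1/α)² Σ_{j=1}^n |c_j|² for every vector c = (c_1, …, c_n) ∈ X. -/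
/-!
Let `E` be the operator `c ↦ ∑ j, c j • (v j - u j)`. Its squared Hilbert–Schmidt norm
`∑ j, ‖v j - u j‖ ^ 2 ≤ n d²` is the trace of `E† E`, so by a Markov count at most `α² d² n`
eigenvalues of `E† E` exceed `α⁻²`. On the orthogonal complement `X` of the corresponding
eigenvectors `‖E c‖ ≤ ‖c‖ / α`, and the triangle inequality gives
`‖∑ j, c j • v j‖ ≥ ‖∑ j, c j • u j‖ - ‖E c‖ = (1 - 1 / α) ‖c‖`.
-/

open Finset Module
open scoped InnerProductSpace

namespace LinearMap

variable {𝕜 E F : Type*} [RCLike 𝕜] [NormedAddCommGroup E] [InnerProductSpace 𝕜 E]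
  [NormedAddCommGroup F] [InnerProductSpace 𝕜 F] [FiniteDimensional 𝕜 E]

namespace IsSymmetric

variable {T : E →ₗ[𝕜] E} {n : ℕ} (hT : T.IsSymmetric) (hn : finrank 𝕜 E = n)

lemma re_inner_apply_self_eq_sum (x : E) :
    RCLike.re ⟪x, T x⟫_𝕜 =
      ∑ i, hT.eigenvalues hn i * ‖⟪hT.eigenvectorBasis hn i, x⟫_𝕜‖ ^ 2 := by
  set w := hT.eigenvectorBasis hn
  have h_eigen (i : Fin n) : ⟪w i, T x⟫_𝕜 = hT.eigenvalues hn i * ⟪w i, x⟫_𝕜 := by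
    rw [← hT, hT.apply_eigenvectorBasis, inner_smul_left, RCLike.conj_ofReal]
  rw [← w.sum_inner_mul_inner, map_sum]
  refine sum_congr rfl fun i _ => ?_
  rw [h_eigen, mul_left_comm, ← inner_conj_symm, RCLike.conj_mul, RCLike.re_ofReal_mul]
  norm_cast

noncomputable def spanEigenvectorsGT (ε : ℝ) : Submodule 𝕜 E :=
  Submodule.span 𝕜 (Set.range fun i : {i // ε < hT.eigenvalues hn i} => hT.eigenvectorBasis hn i)

lemma re_inner_apply_self_le_of_mem_orthogonal {ε : ℝ} {x : E}
    (hx : x ∈ (hT.spanEigenvectorsGT hn ε)ᗮ) :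
    RCLike.re ⟪x, T x⟫_𝕜 ≤ ε * ‖x‖ ^ 2 := by
  rw [hT.re_inner_apply_self_eq_sum hn, ← (hT.eigenvectorBasis hn).sum_sq_norm_inner_right,
    mul_sum]
  refine sum_le_sum fun i _ => ?_
  by_cases hi : ε < hT.eigenvalues hn i
  · have : ⟪hT.eigenvectorBasis hn i, x⟫_𝕜 = 0 :=
      (Submodule.mem_orthogonal _ _).mp hx _ (Submodule.subset_span ⟨⟨i, hi⟩, rfl⟩)
    simp [this]
  · exact mul_le_mul_of_nonneg_right (not_lt.mp hi) (sq_nonneg _)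

lemma finrank_spanEigenvectorsGT_mul_le (hμ : ∀ i, 0 ≤ hT.eigenvalues hn i) {ε : ℝ}
    (hε : 0 ≤ ε) :
    (finrank 𝕜 (hT.spanEigenvectorsGT hn ε) : ℝ) * ε ≤ RCLike.re (T.trace 𝕜 E) := by
  classical
  set s := univ.filter fun i => ε < hT.eigenvalues hn i
  have h_card : finrank 𝕜 (hT.spanEigenvectorsGT hn ε) ≤ s.card :=
    (finrank_range_le_card _).trans_eq (Fintype.card_subtype _)
  calc (finrank 𝕜 (hT.spanEigenvectorsGT hn ε) : ℝ) * ε ≤ s.card * ε := by gcongr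
    _ ≤ ∑ i ∈ s, hT.eigenvalues hn i := by
      simpa using s.card_nsmul_le_sum _ ε fun i hi => (mem_filter.mp hi).2.le
    _ ≤ ∑ i, hT.eigenvalues hn i := sum_le_univ_sum_of_nonneg hμ
    _ = RCLike.re (T.trace 𝕜 E) := (hT.re_trace_eq_sum_eigenvalues hn).symm

end IsSymmetric

variable [FiniteDimensional 𝕜 F]

lemma re_inner_adjoint_comp_self_apply (A : E →ₗ[𝕜] F) (x : E) :
    RCLike.re ⟪x, (A.adjoint ∘ₗ A) x⟫_𝕜 = ‖A x‖ ^ 2 := by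
  rw [comp_apply, adjoint_inner_right, inner_self_eq_norm_sq]

lemma re_trace_adjoint_comp_self {ι : Type*} [Fintype ι] (A : E →ₗ[𝕜] F)
    (b : OrthonormalBasis ι 𝕜 E) :
    RCLike.re ((A.adjoint ∘ₗ A).trace 𝕜 E) = ∑ i, ‖A (b i)‖ ^ 2 := by
  simp only [trace_eq_sum_inner _ b, map_sum, re_inner_adjoint_comp_self_apply]

theorem exists_submodule_norm_apply_sq_le {ι : Type*} [Fintype ι] (A : E →ₗ[𝕜] F)
    (b : OrthonormalBasis ι 𝕜 E) {ε : ℝ} (hε : 0 < ε) :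
    ∃ X : Submodule 𝕜 E, (finrank 𝕜 E : ℝ) - (∑ i, ‖A (b i)‖ ^ 2) / ε ≤ finrank 𝕜 X ∧
      ∀ x ∈ X, ‖A x‖ ^ 2 ≤ ε * ‖x‖ ^ 2 := by
  have hT := A.isSymmetric_adjoint_comp_self
  have hμ := (A.isPositive_adjoint_comp_self).nonneg_eigenvalues rfl
  set Y := hT.spanEigenvectorsGT rfl ε
  refine ⟨Yᗮ, ?_, fun x hx => ?_⟩
  · have h_add : (finrank 𝕜 Y : ℝ) + finrank 𝕜 Yᗮ = finrank 𝕜 E := by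
      exact_mod_cast Y.finrank_add_finrank_orthogonal
    have h_Y : (finrank 𝕜 Y : ℝ) ≤ (∑ i, ‖A (b i)‖ ^ 2) / ε := by
      rw [le_div_iff₀ hε, ← A.re_trace_adjoint_comp_self b]
      exact hT.finrank_spanEigenvectorsGT_mul_le rfl hμ hε.le
    linarith
  · rw [← A.re_inner_adjoint_comp_self_apply]
    exact hT.re_inner_apply_self_le_of_mem_orthogonal rfl hx

end LinearMap

theorem exists_subspace_quadratic_bound_general (n : ℕ) (d : ℝ)
    (u : OrthonormalBasis (Fin n) ℂ (EuclideanSpace ℂ (Fin n)))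
    (v : Fin n → EuclideanSpace ℂ (Fin n))
    (hv : ∀ j : Fin n, ‖v j - u j‖ ≤ d)
    (α : ℝ) (hα1 : 1 < α) :
    ∃ X : Submodule ℂ (EuclideanSpace ℂ (Fin n)),
      (1 - α ^ 2 * d ^ 2) * (n : ℝ) - 1 < (Module.finrank ℂ X : ℝ) ∧
      ∀ c ∈ X, (1 - 1 / α) ^ 2 * ∑ j : Fin n, ‖c j‖ ^ 2 ≤ ‖∑ j : Fin n, c j • v j‖ ^ 2 := by
  have hα0 : 0 < α := one_pos.trans hα1
  set V := Fintype.linearCombination ℂ v ∘ₗ (WithLp.linearEquiv 2 ℂ (Fin n → ℂ)).toLinearMap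
  set U := u.repr.symm.toLinearEquiv.toLinearMap
  have hV (c : EuclideanSpace ℂ (Fin n)) : V c = ∑ j, c j • v j := by
    simp [V, Fintype.linearCombination_apply]
  have h_HS : ∑ j, ‖(V - U) (EuclideanSpace.basisFun (Fin n) ℂ j)‖ ^ 2 ≤ n * d ^ 2 := by
    calc ∑ j, ‖(V - U) (EuclideanSpace.basisFun (Fin n) ℂ j)‖ ^ 2 = ∑ j, ‖v j - u j‖ ^ 2 := by
          simp [V, U, Fintype.linearCombination_apply]
      _ ≤ ∑ _j : Fin n, d ^ 2 := sum_le_sum fun j _ => pow_le_pow_left₀ (norm_nonneg _) (hv j) 2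
      _ = n * d ^ 2 := by simp
  obtain ⟨X, h_dim, h_small⟩ := (V - U).exists_submodule_norm_apply_sq_le
    (EuclideanSpace.basisFun (Fin n) ℂ) (ε := (α⁻¹) ^ 2) (by positivity)
  refine ⟨X, ?_, fun c hc => ?_⟩
  · rw [finrank_euclideanSpace_fin, div_eq_mul_inv, inv_pow, inv_inv] at h_dim
    linarith [mul_le_mul_of_nonneg_right h_HS (sq_nonneg α)]
  · have h_pert : ‖(V - U) c‖ ≤ α⁻¹ * ‖c‖ :=
      le_of_pow_le_pow_left₀ two_ne_zero (by positivity) (by rw [mul_pow]; exact h_small c hc)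
    have h_low : (1 - 1 / α) * ‖c‖ ≤ ‖V c‖ := by
      have h_U : ‖U c‖ = ‖c‖ := u.repr.symm.norm_map c
      have h_tri : ‖U c‖ ≤ ‖V c‖ + ‖(V - U) c‖ := by
        simpa using norm_sub_le (V c) ((V - U) c)
      rw [sub_mul, one_div]
      linarith
    rw [← EuclideanSpace.norm_sq_eq, ← hV, ← mul_pow]
    have : 0 ≤ 1 - 1 / α := by rw [sub_nonneg, div_le_one hα0]; exact hα1.le
    gcongr

/-- **Lemma 2 (Kolmogorov width type estimate).** If vectors `v_j` in `ℂⁿ` satisfy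
`‖v_j − u_j‖ ≤ d` for an orthonormal basis `{u_j}`, then for every `1 < α < 1/d` there is a
subspace `X ⊆ ℂⁿ` with `dim X > (1 − α²d²)n − 1` on which
`‖Σ c_j v_j‖² ≥ (1 − 1/α)² Σ |c_j|²`. -/
theorem exists_subspace_quadratic_bound (n : ℕ) (d : ℝ) (hd0 : 0 < d) (hd1 : d < 1)
    (u : OrthonormalBasis (Fin n) ℂ (EuclideanSpace ℂ (Fin n)))
    (v : Fin n → EuclideanSpace ℂ (Fin n))
    (hv : ∀ j : Fin n, ‖v j - u j‖ ≤ d)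
    (α : ℝ) (hα1 : 1 < α) (hα2 : α < 1 / d) :
    ∃ X : Submodule ℂ (EuclideanSpace ℂ (Fin n)),
      (1 - α ^ 2 * d ^ 2) * (n : ℝ) - 1 < (Module.finrank ℂ X : ℝ) ∧
      ∀ c ∈ X, (1 - 1 / α) ^ 2 * ∑ j : Fin n, ‖c j‖ ^ 2 ≤ ‖∑ j : Fin n, c j • v j‖ ^ 2 :=
  exists_subspace_quadratic_bound_general n d u v hv α hα1
end

section
/- For every δ > 0 and every β with 0 < β < 1 there exist a constant C > 0 and a function ψ ∈ PW_{[−δ,δ]} (the continuous representative) such that ψ(0) = 1, |ψ(x)| ≤ 1 for all x ∈ ℝ, and |ψ(x)| ≤ C e^{−|x|^β} for all x ∈ ℝ. -/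
open MeasureTheory Filter

open scoped Topology

/-!
The function is `ψ(x) = ∏ₖ sinc(aₖ x)` with `aₖ = c (k + 1)^(-p)`, where `1 < p < 1/β` and
`∑ aₖ ≤ δ`. Each finite product is the Fourier transform of the density of a sum of independent
uniform variables on `[-aₖ, aₖ]`, which is supported in `[-∑ aₖ, ∑ aₖ]`. Averaging over `[-b, b]`
preserves a Lipschitz constant `K` and moves a `K`-Lipschitz function by at most `K b`, so these
densities converge uniformly to a bounded density on `[-δ, δ]` whose transform is `ψ`. For large
`|x|` and `m = ⌊|x|^β⌋`, the first `m + 1` factors are each at most `(aₘ |x|)⁻¹ ≤ e⁻¹`, which gives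
`|ψ(x)| ≤ e^(-(m+1)) ≤ e^(-|x|^β)`.
-/

namespace SubexpDecay

noncomputable section

theorem norm_cexp_I_mul_mul (t x : ℝ) : ‖Complex.exp (Complex.I * t * x)‖ = 1 := by
  rw [Complex.norm_exp]; simp

theorem integral_cexp_I_mul_mul_eq_sinc (b x : ℝ) :
    ∫ s in -b..b, Complex.exp (Complex.I * s * x) = 2 * b * Real.sinc (b * x) := by
  rcases eq_or_ne x 0 with rfl | hx
  · simp; ring
  rcases eq_or_ne b 0 with rfl | hb
  · simp
  have hIx : Complex.I * x ≠ 0 := mul_ne_zero Complex.I_ne_zero (by exact_mod_cast hx)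
  have hcomm : ∀ s : ℝ, Complex.I * s * x = (Complex.I * x) * s := fun s => by ring
  simp_rw [hcomm, integral_exp_mul_complex hIx, Real.sinc_of_ne_zero (mul_ne_zero hb hx)]
  have hb' : (b : ℂ) ≠ 0 := by exact_mod_cast hb
  have hx' : (x : ℂ) ≠ 0 := by exact_mod_cast hx
  push_cast
  rw [Complex.sin]
  field_simp
  ring_nf
  rw [Complex.I_sq]
  ring

theorem abs_sinc_le_inv_abs {x : ℝ} (hx : x ≠ 0) : |Real.sinc x| ≤ |x|⁻¹ := by
  rw [Real.sinc_of_ne_zero hx, abs_div, div_eq_mul_inv]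
  exact mul_le_of_le_one_left (inv_nonneg.2 (abs_nonneg x)) (Real.abs_sin_le_one x)

theorem prod_abs_sinc_le_exp_neg {a : ℕ → ℝ} {m : ℕ} {x : ℝ} (hanti : Antitone a)
    (h : Real.exp 1 ≤ a m * |x|) :
    ∏ k ∈ Finset.range (m + 1), |Real.sinc (a k * x)| ≤ Real.exp (-(m + 1)) := by
  have hpos : 0 < a m * |x| := (Real.exp_pos 1).trans_le h
  have hfactor : ∀ k ∈ Finset.range (m + 1), |Real.sinc (a k * x)| ≤ Real.exp (-1) := by
    intro k hk
    have hmk : a m * |x| ≤ |a k * x| := by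
      rw [abs_mul]
      exact mul_le_mul_of_nonneg_right
        ((hanti (Finset.mem_range_succ_iff.1 hk)).trans (le_abs_self _)) (abs_nonneg x)
    calc |Real.sinc (a k * x)| ≤ |a k * x|⁻¹ := abs_sinc_le_inv_abs (abs_pos.1 (hpos.trans_le hmk))
      _ ≤ (Real.exp 1)⁻¹ := inv_anti₀ (Real.exp_pos 1) (h.trans hmk)
      _ = Real.exp (-1) := (Real.exp_neg 1).symm
  calc ∏ k ∈ Finset.range (m + 1), |Real.sinc (a k * x)|
      ≤ ∏ _k ∈ Finset.range (m + 1), Real.exp (-1) :=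
        Finset.prod_le_prod (fun _ _ => abs_nonneg _) hfactor
    _ = Real.exp (-(m + 1)) := by
        rw [Finset.prod_const, Finset.card_range, ← Real.exp_nat_mul]; push_cast; ring_nf

-- The kernel `e^{itx}` of `IsPaleyWiener`, not the `e^{-2πitx}` of Mathlib's `𝓕`.
def expTransform (g : ℝ → ℝ) (x : ℝ) : ℂ :=
  ∫ t, (g t : ℂ) * Complex.exp (Complex.I * t * x)

theorem expTransform_eq_setIntegral {g : ℝ → ℝ} {s : Set ℝ} (hg : ∀ t ∉ s, g t = 0) (x : ℝ) :
    expTransform g x = ∫ t in s, (g t : ℂ) * Complex.exp (Complex.I * t * x) := by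
  refine (setIntegral_eq_integral_of_forall_compl_eq_zero fun t ht => ?_).symm
  rw [hg t ht, Complex.ofReal_zero, zero_mul]

theorem norm_le_indicator_of_abs_le {g : ℝ → ℝ} {M S : ℝ} (hM : ∀ t, |g t| ≤ M)
    (hS : ∀ t, S < |t| → g t = 0) (t : ℝ) : ‖g t‖ ≤ (Set.Icc (-S) S).indicator (fun _ => M) t := by
  by_cases ht : t ∈ Set.Icc (-S) S
  · rw [Set.indicator_of_mem ht]; exact hM t
  · rw [Set.indicator_of_notMem ht, hS t (lt_of_not_ge fun h => ht (abs_le.1 h)), norm_zero]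

theorem integrable_of_abs_le {g : ℝ → ℝ} {M S : ℝ} (hg : Measurable g) (hM : ∀ t, |g t| ≤ M)
    (hS : ∀ t, S < |t| → g t = 0) : Integrable g :=
  ((integrable_indicator_iff measurableSet_Icc).2 (integrableOn_const measure_Icc_lt_top.ne)).mono'
    hg.aestronglyMeasurable (Eventually.of_forall (norm_le_indicator_of_abs_le hM hS))

theorem isPaleyWiener_expTransform {g : ℝ → ℝ} {M S : ℝ} (hg : Measurable g)
    (hM : ∀ t, |g t| ≤ M) (hS : ∀ t, S < |t| → g t = 0) :
    IsPaleyWiener (Set.Icc (-S) S) (expTransform g) := by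
  have hout : ∀ t ∉ Set.Icc (-S) S, g t = 0 := fun t ht =>
    hS t (lt_of_not_ge fun h => ht (abs_le.1 h))
  refine ⟨fun t => g t, ?_, fun t ht => by simp only [hout t ht, Complex.ofReal_zero],
    expTransform_eq_setIntegral hout⟩
  refine (memLp_indicator_const 2 (measurableSet_Icc (a := -S) (b := S)) M
    (Or.inr measure_Icc_lt_top.ne)).mono' (Complex.measurable_ofReal.comp hg).aestronglyMeasurable
    (Eventually.of_forall fun t => ?_)
  rw [Complex.norm_real]
  exact norm_le_indicator_of_abs_le hM hS t

theorem tendsto_expTransform_of_tendsto {g : ℕ → ℝ → ℝ} {G : ℝ → ℝ} {M S : ℝ}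
    (hg : ∀ n, Measurable (g n)) (hM : ∀ n t, |g n t| ≤ M) (hS : ∀ n t, S < |t| → g n t = 0)
    (hlim : ∀ t, Tendsto (fun n => g n t) atTop (𝓝 (G t))) (x : ℝ) :
    Tendsto (fun n => expTransform (g n) x) atTop (𝓝 (expTransform G x)) := by
  refine tendsto_integral_of_dominated_convergence ((Set.Icc (-S) S).indicator fun _ => M)
    (fun n => ?_) ((integrable_indicator_iff measurableSet_Icc).2
      (integrableOn_const measure_Icc_lt_top.ne)) (fun n => Eventually.of_forall fun t => ?_)
    (Eventually.of_forall fun t => ?_)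
  · exact ((Complex.measurable_ofReal.comp (hg n)).mul (by fun_prop)).aestronglyMeasurable
  · rw [norm_mul, norm_cexp_I_mul_mul, mul_one, Complex.norm_real]
    exact norm_le_indicator_of_abs_le (hM n) (hS n) t
  · exact ((Complex.continuous_ofReal.tendsto _).comp (hlim t)).mul_const _

section Box

variable {b M : ℝ} {K : NNReal} {f : ℝ → ℝ}

def boxDensity (b : ℝ) : ℝ → ℝ :=
  (Set.Icc (-b) b).indicator fun _ => (2 * b)⁻¹

theorem measurable_boxDensity (b : ℝ) : Measurable (boxDensity b) :=
  measurable_const.indicator measurableSet_Icc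

theorem abs_boxDensity_le (hb : 0 < b) (t : ℝ) : |boxDensity b t| ≤ (2 * b)⁻¹ := by
  rw [boxDensity, abs_of_nonneg (Set.indicator_nonneg (fun _ _ => by positivity) t)]
  exact Set.indicator_le_self' (fun _ _ => by positivity) t

theorem boxDensity_eq_zero {b t : ℝ} (ht : b < |t|) : boxDensity b t = 0 := by
  rw [boxDensity]
  exact Set.indicator_of_notMem (by rw [Set.mem_Icc, ← abs_le]; exact ht.not_ge) _

theorem expTransform_boxDensity (hb : 0 < b) (x : ℝ) :
    expTransform (boxDensity b) x = Real.sinc (b * x) := by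
  have hout : ∀ t ∉ Set.Icc (-b) b, boxDensity b t = 0 := fun t ht => Set.indicator_of_notMem ht _
  rw [expTransform_eq_setIntegral hout, integral_Icc_eq_integral_Ioc,
    setIntegral_congr_fun measurableSet_Ioc fun t ht => by
      rw [boxDensity, Set.indicator_of_mem (Set.Ioc_subset_Icc_self ht)],
    integral_const_mul, ← intervalIntegral.integral_of_le (by linarith),
    integral_cexp_I_mul_mul_eq_sinc]
  have hb' : (b : ℂ) ≠ 0 := by exact_mod_cast hb.ne'
  push_cast; field_simp

def boxAverage (b : ℝ) (f : ℝ → ℝ) (t : ℝ) : ℝ :=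
  (2 * b)⁻¹ * ∫ s in -b..b, f (t - s)

theorem abs_intervalIntegral_le {g : ℝ → ℝ} {u v C : ℝ} (hg : ∀ x ∈ Set.uIoc u v, |g x| ≤ C) :
    |∫ x in u..v, g x| ≤ C * |v - u| := by
  simpa only [Real.norm_eq_abs] using intervalIntegral.norm_integral_le_of_norm_le_const (f := g)
    (by simpa only [Real.norm_eq_abs] using hg)

theorem boxAverage_eq (b : ℝ) (f : ℝ → ℝ) (t : ℝ) :
    boxAverage b f t = (2 * b)⁻¹ * ∫ u in t - b..t + b, f u := by
  rw [boxAverage, intervalIntegral.integral_comp_sub_left, sub_neg_eq_add]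

theorem abs_boxAverage_le (hb : 0 < b) (hf : ∀ t, |f t| ≤ M) (t : ℝ) :
    |boxAverage b f t| ≤ M := by
  have hint := abs_intervalIntegral_le (u := -b) (v := b) fun s _ => hf (t - s)
  rw [boxAverage, abs_mul, abs_of_pos (by positivity : 0 < (2 * b)⁻¹)]
  calc (2 * b)⁻¹ * |∫ s in -b..b, f (t - s)| ≤ (2 * b)⁻¹ * (M * |b - -b|) := by gcongr
    _ = M := by rw [abs_of_pos (by linarith)]; field_simp; ring

theorem boxAverage_eq_zero {S : ℝ} (hb : 0 ≤ b) (hf : ∀ t, S < |t| → f t = 0) {t : ℝ}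
    (ht : S + b < |t|) : boxAverage b f t = 0 := by
  rw [boxAverage]
  suffices ∫ s in -b..b, f (t - s) = 0 by rw [this, mul_zero]
  refine intervalIntegral.integral_zero_ae (Eventually.of_forall fun s hs => hf _ ?_)
  rw [Set.uIoc_of_le (by linarith)] at hs
  have := abs_sub_abs_le_abs_sub t s
  have := abs_le.2 ⟨hs.1.le, hs.2⟩
  linarith

theorem lipschitzWith_boxAverage_of_abs_le (hb : 0 < b) (hM : ∀ t, |f t| ≤ M)
    (hf : Measurable f) : LipschitzWith (M / b).toNNReal (boxAverage b f) := by
  have hint : ∀ u v, IntervalIntegrable f volume u v := fun u v =>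
    (Measure.integrableOn_of_bounded (M := M) isCompact_uIcc.measure_lt_top.ne
      hf.aestronglyMeasurable (Eventually.of_forall hM)).intervalIntegrable
  refine LipschitzWith.of_dist_le_mul fun t t' => ?_
  rw [Real.dist_eq, Real.dist_eq, boxAverage_eq, boxAverage_eq, ← mul_sub,
    intervalIntegral.integral_interval_sub_interval_comm (hint _ _) (hint _ _) (hint _ _),
    abs_mul, abs_of_pos (by positivity : 0 < (2 * b)⁻¹)]
  have hedge : ∀ c, |∫ w in t + c..t' + c, f w| ≤ M * |t - t'| := fun c => by
    simpa [abs_sub_comm] using abs_intervalIntegral_le (u := t + c) (v := t' + c) fun w _ => hM w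
  have hM0 : 0 ≤ M := (abs_nonneg _).trans (hM 0)
  calc (2 * b)⁻¹ * |(∫ u in t - b..t' - b, f u) - ∫ u in t + b..t' + b, f u|
      ≤ (2 * b)⁻¹ * (M * |t - t'| + M * |t - t'|) := by
        gcongr
        refine (abs_sub _ _).trans (add_le_add ?_ (hedge b))
        simpa only [sub_eq_add_neg] using hedge (-b)
    _ = (M / b).toNNReal * |t - t'| := by
        rw [Real.coe_toNNReal _ (by positivity)]; field_simp; ring

theorem lipschitzWith_boxAverage (hb : 0 < b) (hf : LipschitzWith K f) :
    LipschitzWith K (boxAverage b f) := by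
  have hint : ∀ t, IntervalIntegrable (fun s => f (t - s)) volume (-b) b := fun t =>
    (hf.continuous.comp (continuous_sub_left t)).intervalIntegrable _ _
  refine LipschitzWith.of_dist_le_mul fun t t' => ?_
  rw [Real.dist_eq, Real.dist_eq, boxAverage, boxAverage, ← mul_sub,
    ← intervalIntegral.integral_sub (hint t) (hint t'), abs_mul,
    abs_of_pos (by positivity : 0 < (2 * b)⁻¹)]
  have hpt : ∀ s, |f (t - s) - f (t' - s)| ≤ K * |t - t'| := fun s => by
    simpa [Real.dist_eq] using hf.dist_le_mul (t - s) (t' - s)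
  calc (2 * b)⁻¹ * |∫ s in -b..b, (f (t - s) - f (t' - s))|
      ≤ (2 * b)⁻¹ * (K * |t - t'| * |b - -b|) := by
        gcongr; exact abs_intervalIntegral_le fun s _ => hpt s
    _ = K * |t - t'| := by rw [abs_of_pos (by linarith : 0 < b - -b)]; field_simp; ring

theorem abs_boxAverage_sub_le (hb : 0 < b) (hf : LipschitzWith K f) (t : ℝ) :
    |boxAverage b f t - f t| ≤ K * b := by
  have hint : IntervalIntegrable (fun s => f (t - s)) volume (-b) b :=
    (hf.continuous.comp (continuous_sub_left t)).intervalIntegrable _ _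
  have hconst : f t = (2 * b)⁻¹ * ∫ _ in -b..b, f t := by
    rw [intervalIntegral.integral_const, smul_eq_mul]; field_simp; ring
  rw [boxAverage, hconst, ← mul_sub,
    ← intervalIntegral.integral_sub hint intervalIntegrable_const, abs_mul,
    abs_of_pos (by positivity : 0 < (2 * b)⁻¹)]
  have hpt : ∀ s ∈ Set.uIoc (-b) b, |f (t - s) - f t| ≤ K * b := fun s hs => by
    rw [Set.uIoc_of_le (by linarith)] at hs
    calc |f (t - s) - f t| ≤ K * |t - s - t| := by
          simpa [Real.dist_eq] using hf.dist_le_mul (t - s) t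
      _ ≤ K * b := by
          gcongr; rw [sub_sub_cancel_left, abs_neg]; exact abs_le.2 ⟨hs.1.le, hs.2⟩
  calc (2 * b)⁻¹ * |∫ s in -b..b, (f (t - s) - f t)| ≤ (2 * b)⁻¹ * (K * b * |b - -b|) := by
        gcongr; exact abs_intervalIntegral_le hpt
    _ = K * b := by rw [abs_of_pos (by linarith)]; field_simp; ring

theorem expTransform_boxAverage (hb : 0 < b) (hf : Integrable f) (hfm : Measurable f) (x : ℝ) :
    expTransform (boxAverage b f) x = Real.sinc (b * x) * expTransform f x := by
  set F : ℝ → ℝ → ℂ := fun t s => (f (t - s) : ℂ) * Complex.exp (Complex.I * t * x)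
  have hpt : ∀ t, (boxAverage b f t : ℂ) * Complex.exp (Complex.I * t * x)
      = ((2 * b)⁻¹ : ℝ) * ∫ s in Set.Ioc (-b) b, F t s := fun t => by
    rw [boxAverage, intervalIntegral.integral_of_le (by linarith), Complex.ofReal_mul,
      ← integral_complex_ofReal, mul_assoc, ← integral_mul_const]
  have hnorm : ∀ t s, ‖F t s‖ = |f (t - s)| := fun t s => by
    rw [norm_mul, norm_cexp_I_mul_mul, mul_one, Complex.norm_real, Real.norm_eq_abs]
  have hFm : Measurable (Function.uncurry F) := by
    simp only [F, Function.uncurry_def]; fun_prop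
  have hF : Integrable (Function.uncurry F) (volume.prod (volume.restrict (Set.Ioc (-b) b))) := by
    refine (integrable_prod_iff' hFm.aestronglyMeasurable).2
      ⟨Eventually.of_forall fun s => ?_, ?_⟩
    · exact (hf.comp_sub_right s).norm.mono'
        (hFm.comp measurable_prodMk_right).aestronglyMeasurable
        (Eventually.of_forall fun t => (hnorm t s).le)
    · simp_rw [Function.uncurry_apply_pair, hnorm, integral_sub_right_eq_self (fun t => |f t|)]
      exact integrableOn_const measure_Ioc_lt_top.ne
  have hinner : ∀ s, ∫ t, F t s = Complex.exp (Complex.I * s * x) * expTransform f x := fun s => by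
    have hshift : ∀ t, F t s = (f (t - s) : ℂ) * Complex.exp (Complex.I * ↑(t - s) * x)
        * Complex.exp (Complex.I * s * x) := fun t => by
      show _ * Complex.exp (Complex.I * t * x) = _
      rw [mul_assoc _ (Complex.exp _), ← Complex.exp_add]; push_cast; ring_nf
    simp_rw [hshift]
    rw [integral_sub_right_eq_self (fun t => (f t : ℂ) * Complex.exp (Complex.I * t * x)
      * Complex.exp (Complex.I * s * x)), integral_mul_const, expTransform, mul_comm]
  calc expTransform (boxAverage b f) x
      = ((2 * b)⁻¹ : ℝ) * ∫ s in Set.Ioc (-b) b, ∫ t, F t s := by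
        rw [expTransform]; simp_rw [hpt]; rw [integral_const_mul, integral_integral_swap hF]
    _ = Real.sinc (b * x) * expTransform f x := by
        simp_rw [hinner]
        rw [integral_mul_const, ← intervalIntegral.integral_of_le (by linarith),
          integral_cexp_I_mul_mul_eq_sinc]
        have hb' : (b : ℂ) ≠ 0 := by exact_mod_cast hb.ne'
        push_cast; field_simp

end Box

-- The density of a sum of independent uniform variables on `[-aₖ, aₖ]`, `k ≤ n`.
def iteratedBox (a : ℕ → ℝ) : ℕ → ℝ → ℝ
  | 0 => boxDensity (a 0)
  | n + 1 => boxAverage (a (n + 1)) (iteratedBox a n)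

def boxLimit (a : ℕ → ℝ) (t : ℝ) : ℝ :=
  limUnder atTop fun n => iteratedBox a n t

section IteratedBox

variable {a : ℕ → ℝ}

theorem abs_iteratedBox_le (ha : ∀ k, 0 < a k) (n : ℕ) (t : ℝ) :
    |iteratedBox a n t| ≤ (2 * a 0)⁻¹ := by
  induction n generalizing t with
  | zero => exact abs_boxDensity_le (ha 0) t
  | succ n ih => exact abs_boxAverage_le (ha _) ih t

theorem iteratedBox_eq_zero (ha : ∀ k, 0 < a k) {n : ℕ} {t : ℝ}
    (ht : ∑ k ∈ Finset.range (n + 1), a k < |t|) : iteratedBox a n t = 0 := by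
  induction n generalizing t with
  | zero => exact boxDensity_eq_zero (by simpa using ht)
  | succ n ih =>
    rw [Finset.sum_range_succ] at ht
    exact boxAverage_eq_zero (ha _).le (fun _ => ih) ht

theorem measurable_iteratedBox (ha : ∀ k, 0 < a k) : ∀ n, Measurable (iteratedBox a n)
  | 0 => measurable_boxDensity _
  | n + 1 => (lipschitzWith_boxAverage_of_abs_le (ha _) (abs_iteratedBox_le ha n)
      (measurable_iteratedBox ha n)).continuous.measurable

theorem lipschitzWith_iteratedBox_succ (ha : ∀ k, 0 < a k) (n : ℕ) :
    LipschitzWith ((2 * a 0)⁻¹ / a 1).toNNReal (iteratedBox a (n + 1)) := by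
  induction n with
  | zero =>
    exact lipschitzWith_boxAverage_of_abs_le (ha 1) (abs_iteratedBox_le ha 0)
      (measurable_iteratedBox ha 0)
  | succ n ih => exact lipschitzWith_boxAverage (ha _) ih

theorem expTransform_iteratedBox (ha : ∀ k, 0 < a k) (n : ℕ) (x : ℝ) :
    expTransform (iteratedBox a n) x = ∏ k ∈ Finset.range (n + 1), (Real.sinc (a k * x) : ℂ) := by
  induction n with
  | zero => simpa [iteratedBox] using expTransform_boxDensity (ha 0) x
  | succ n ih =>
    rw [iteratedBox, expTransform_boxAverage (ha _)
      (integrable_of_abs_le (measurable_iteratedBox ha n) (abs_iteratedBox_le ha n)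
        fun _ => iteratedBox_eq_zero ha)
      (measurable_iteratedBox ha n), ih]
    exact (Finset.prod_range_succ_comm (fun k => (Real.sinc (a k * x) : ℂ)) _).symm

theorem abs_iteratedBox_succ_succ_sub_le (ha : ∀ k, 0 < a k) (n : ℕ) (t : ℝ) :
    |iteratedBox a (n + 2) t - iteratedBox a (n + 1) t|
      ≤ ((2 * a 0)⁻¹ / a 1).toNNReal * a (n + 2) :=
  abs_boxAverage_sub_le (ha _) (lipschitzWith_iteratedBox_succ ha n) t

theorem tendsto_iteratedBox (ha : ∀ k, 0 < a k) (hsum : Summable a) (t : ℝ) :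
    Tendsto (fun n => iteratedBox a n t) atTop (𝓝 (boxLimit a t)) := by
  have hcauchy : CauchySeq fun n => iteratedBox a (n + 1) t := by
    refine cauchySeq_of_dist_le_of_summable (fun n => ((2 * a 0)⁻¹ / a 1).toNNReal * a (n + 2))
      (fun n => ?_) (((summable_nat_add_iff 2).2 hsum).mul_left _)
    rw [Real.dist_eq, abs_sub_comm]
    exact abs_iteratedBox_succ_succ_sub_le ha n t
  obtain ⟨l, hl⟩ := cauchySeq_tendsto_of_complete hcauchy
  exact tendsto_nhds_limUnder ⟨l, (tendsto_add_atTop_iff_nat 1).1 hl⟩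

theorem measurable_boxLimit (ha : ∀ k, 0 < a k) (hsum : Summable a) : Measurable (boxLimit a) :=
  measurable_of_tendsto_metrizable (measurable_iteratedBox ha)
    (tendsto_pi_nhds.2 (tendsto_iteratedBox ha hsum))

theorem abs_boxLimit_le (ha : ∀ k, 0 < a k) (hsum : Summable a) (t : ℝ) :
    |boxLimit a t| ≤ (2 * a 0)⁻¹ :=
  le_of_tendsto (tendsto_iteratedBox ha hsum t).abs
    (Eventually.of_forall fun n => abs_iteratedBox_le ha n t)

theorem iteratedBox_eq_zero_of_tsum_lt (ha : ∀ k, 0 < a k) (hsum : Summable a) (n : ℕ) {t : ℝ}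
    (ht : ∑' k, a k < |t|) : iteratedBox a n t = 0 :=
  iteratedBox_eq_zero ha ((Summable.sum_le_tsum _ (fun k _ => (ha k).le) hsum).trans_lt ht)

theorem boxLimit_eq_zero (ha : ∀ k, 0 < a k) (hsum : Summable a) {t : ℝ}
    (ht : ∑' k, a k < |t|) : boxLimit a t = 0 :=
  tendsto_nhds_unique (tendsto_iteratedBox ha hsum t)
    (tendsto_const_nhds.congr fun n => (iteratedBox_eq_zero_of_tsum_lt ha hsum n ht).symm)

theorem tendsto_prod_sinc (ha : ∀ k, 0 < a k) (hsum : Summable a) (x : ℝ) :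
    Tendsto (fun n => ∏ k ∈ Finset.range (n + 1), (Real.sinc (a k * x) : ℂ)) atTop
      (𝓝 (expTransform (boxLimit a) x)) := by
  simp_rw [← expTransform_iteratedBox ha]
  exact tendsto_expTransform_of_tendsto (measurable_iteratedBox ha) (abs_iteratedBox_le ha)
    (fun n _ => iteratedBox_eq_zero_of_tsum_lt ha hsum n) (tendsto_iteratedBox ha hsum) x

theorem norm_expTransform_boxLimit_le_prod (ha : ∀ k, 0 < a k) (hsum : Summable a) (m : ℕ)
    (x : ℝ) :
    ‖expTransform (boxLimit a) x‖ ≤ ∏ k ∈ Finset.range (m + 1), |Real.sinc (a k * x)| := by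
  have hanti : Antitone fun n => ∏ k ∈ Finset.range (n + 1), |Real.sinc (a k * x)| :=
    antitone_nat_of_succ_le fun n => by
      rw [Finset.prod_range_succ _ (n + 1)]
      exact mul_le_of_le_one_right (Finset.prod_nonneg fun _ _ => abs_nonneg _)
        (Real.abs_sinc_le_one _)
  refine le_of_tendsto (tendsto_prod_sinc ha hsum x).norm
    (eventually_atTop.2 ⟨m, fun n hn => ?_⟩)
  simp only [norm_prod, Complex.norm_real, Real.norm_eq_abs]
  exact hanti hn

theorem norm_expTransform_boxLimit_le_one (ha : ∀ k, 0 < a k) (hsum : Summable a) (x : ℝ) :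
    ‖expTransform (boxLimit a) x‖ ≤ 1 :=
  (norm_expTransform_boxLimit_le_prod ha hsum 0 x).trans (by simpa using Real.abs_sinc_le_one _)

theorem expTransform_boxLimit_zero (ha : ∀ k, 0 < a k) (hsum : Summable a) :
    expTransform (boxLimit a) 0 = 1 :=
  tendsto_nhds_unique (tendsto_prod_sinc ha hsum 0) (by simp [Real.sinc_zero])

theorem norm_expTransform_boxLimit_le_exp_neg_rpow (ha : ∀ k, 0 < a k) (hsum : Summable a)
    (hanti : Antitone a) {β x : ℝ} (hx : Real.exp 1 ≤ a ⌊|x| ^ β⌋₊ * |x|) :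
    ‖expTransform (boxLimit a) x‖ ≤ Real.exp (-|x| ^ β) :=
  calc ‖expTransform (boxLimit a) x‖
      ≤ ∏ k ∈ Finset.range (⌊|x| ^ β⌋₊ + 1), |Real.sinc (a k * x)| :=
        norm_expTransform_boxLimit_le_prod ha hsum _ x
    _ ≤ Real.exp (-(⌊|x| ^ β⌋₊ + 1)) := prod_abs_sinc_le_exp_neg hanti hx
    _ ≤ Real.exp (-|x| ^ β) := by
        gcongr; exact (Nat.lt_floor_add_one _).le

end IteratedBox

theorem eventually_exp_one_le_div_rpow_floor_mul {A p β : ℝ} (hA : 0 < A) (hp : 0 ≤ p)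
    (hβ : 0 < β) (hβp : β * p < 1) :
    ∀ᶠ r in atTop, Real.exp 1 ≤ A / ((⌊r ^ β⌋₊ : ℝ) + 1) ^ p * r := by
  have hgrow := Tendsto.const_mul_atTop (show 0 < A / 2 ^ p by positivity)
    (tendsto_rpow_atTop (sub_pos.2 hβp))
  filter_upwards [hgrow.eventually_ge_atTop (Real.exp 1), eventually_ge_atTop 1] with r hr hr1
  have hr0 : 0 < r := zero_lt_one.trans_le hr1
  have hfloor : (⌊r ^ β⌋₊ : ℝ) + 1 ≤ 2 * r ^ β := by
    have := Nat.floor_le (Real.rpow_nonneg hr0.le β)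
    have := Real.one_le_rpow hr1 hβ.le
    linarith
  calc Real.exp 1 ≤ A / 2 ^ p * r ^ (1 - β * p) := hr
    _ = A / (2 * r ^ β) ^ p * r := by
        rw [Real.mul_rpow zero_le_two (Real.rpow_nonneg hr0.le β), ← Real.rpow_mul hr0.le,
          Real.rpow_sub hr0, Real.rpow_one]
        field_simp
    _ ≤ A / ((⌊r ^ β⌋₊ : ℝ) + 1) ^ p * r := by gcongr

theorem exists_summable_weights {δ β : ℝ} (hδ : 0 < δ) (hβ0 : 0 < β) (hβ1 : β < 1) :
    ∃ a : ℕ → ℝ, (∀ k, 0 < a k) ∧ Antitone a ∧ Summable a ∧ ∑' k, a k ≤ δ ∧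
      ∀ᶠ r in atTop, Real.exp 1 ≤ a ⌊r ^ β⌋₊ * r := by
  obtain ⟨p, hp1, hpβ⟩ := exists_between ((one_lt_inv₀ hβ0).2 hβ1)
  have hβp : β * p < 1 :=
    calc β * p < β * β⁻¹ := mul_lt_mul_of_pos_left hpβ hβ0
      _ = 1 := mul_inv_cancel₀ hβ0.ne'
  have hZ : Summable fun k : ℕ => 1 / ((k : ℝ) + 1) ^ p :=
    ((Real.summable_one_div_nat_add_rpow 1 p).2 hp1).congr fun k => by
      rw [abs_of_pos (by positivity)]
  set Z := ∑' k : ℕ, 1 / ((k : ℝ) + 1) ^ p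
  have hZ0 : 0 < Z := hZ.tsum_pos (fun k => by positivity) 0 (by positivity)
  have hform : (fun k : ℕ => δ / Z / ((k : ℝ) + 1) ^ p) =
      fun k : ℕ => δ / Z * (1 / ((k : ℝ) + 1) ^ p) := by
    simp only [mul_one_div]
  refine ⟨fun k => δ / Z / ((k : ℝ) + 1) ^ p, fun k => by positivity, fun j k hjk => ?_,
    hform ▸ hZ.mul_left _, ?_, eventually_exp_one_le_div_rpow_floor_mul (by positivity)
      (zero_le_one.trans hp1.le) hβ0 hβp⟩
  · dsimp only
    gcongr
  · rw [hform, tsum_mul_left, div_mul_cancel₀ _ hZ0.ne']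

theorem exists_pos_mul_exp_neg_rpow_bound {g : ℝ → ℝ} {β X : ℝ} (hβ : 0 ≤ β) (h1 : ∀ x, g x ≤ 1)
    (hX : ∀ x, X ≤ |x| → g x ≤ Real.exp (-|x| ^ β)) :
    ∃ C > 0, ∀ x, g x ≤ C * Real.exp (-|x| ^ β) := by
  refine ⟨Real.exp (|X| ^ β), Real.exp_pos _, fun x => ?_⟩
  rcases le_or_gt X |x| with hx | hx
  · exact (hX x hx).trans (le_mul_of_one_le_left (Real.exp_pos _).le
      (Real.one_le_exp (Real.rpow_nonneg (abs_nonneg X) β)))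
  · calc g x ≤ 1 := h1 x
      _ ≤ Real.exp (|X| ^ β) * Real.exp (-|x| ^ β) := by
        rw [← Real.exp_add]
        refine Real.one_le_exp (sub_nonneg.2 ?_)
        exact Real.rpow_le_rpow (abs_nonneg x) (hx.le.trans (le_abs_self X)) hβ

end

end SubexpDecay

open SubexpDecay

/-- For all `δ > 0` and `0 < β < 1` there is a function `ψ ∈ PW_{[−δ,δ]}` with `ψ(0) = 1`,
`|ψ| ≤ 1`, and `|ψ(x)| ≤ C e^{−|x|^β}`. -/
theorem exists_subexp_decay_pw (δ β : ℝ) (hδ : 0 < δ) (hβ0 : 0 < β) (hβ1 : β < 1) :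
    ∃ C > (0 : ℝ), ∃ ψ : ℝ → ℂ,
      IsPaleyWiener (Set.Icc (-δ) δ) ψ ∧
      ψ 0 = 1 ∧
      (∀ x : ℝ, ‖ψ x‖ ≤ 1) ∧
      ∀ x : ℝ, ‖ψ x‖ ≤ C * Real.exp (-|x| ^ β) := by
  obtain ⟨a, ha, hanti, hsum, hδa, hdecay⟩ := exists_summable_weights hδ hβ0 hβ1
  obtain ⟨X, hX⟩ := eventually_atTop.1 hdecay
  have hψ1 := norm_expTransform_boxLimit_le_one ha hsum
  obtain ⟨C, hC, hψC⟩ := exists_pos_mul_exp_neg_rpow_bound hβ0.le hψ1 fun x hx =>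
    norm_expTransform_boxLimit_le_exp_neg_rpow ha hsum hanti (hX |x| hx)
  refine ⟨C, hC, expTransform (boxLimit a), ?_, expTransform_boxLimit_zero ha hsum, hψ1, hψC⟩
  exact isPaleyWiener_expTransform (measurable_boxLimit ha hsum) (abs_boxLimit_le ha hsum)
    fun t ht => boxLimit_eq_zero ha hsum (hδa.trans_lt ht)
end
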